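/- arXiv:1207.2538 — 2 statements merged into one kernel-verified Lean document; each statement's English description precedes it below -/
import Mathlib

section
/- For a finite poset P on {x_1,...,x_d}, a 0/1-vector ρ(W) = Σ_{i ∈ W} e_i is a vertex of the chain polytope C(P) if and only if W is an antichain of P. -/
/-!
The chain polytope lies in the unit cube `[0,1]^P`, and every 0/1-vector is a vertex of the cube,
hence a vertex of the chain polytope as soon as it belongs to it. Membership of `ρ(W)` says that
every chain meets `W` in at most one point, which is exactly the antichain condition.
-/

/-- The chain polytope of a finite poset `P`: nonnegative functions whose sum
along every chain is at most `1`. -/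
def chainPolytope (P : Type*) [Fintype P] [PartialOrder P] : Set (P → ℝ) :=
  {a | (∀ i, 0 ≤ a i) ∧ ∀ C : Finset P, IsChain (· ≤ ·) (C : Set P) → ∑ i ∈ C, a i ≤ 1}

open Set

theorem indicator_one_mem_extremePoints_Icc {ι : Type*} (W : Set ι) :
    W.indicator (1 : ι → ℝ) ∈ extremePoints ℝ (Icc 0 1) := by
  rw [← pi_univ_Icc, extremePoints_pi]
  intro i _
  simp only [Pi.zero_apply, Pi.one_apply, extremePoints_Icc zero_le_one]
  by_cases hi : i ∈ W <;> simp [hi]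

section ChainPolytope

variable {P : Type*} [Fintype P] [PartialOrder P]

theorem chainPolytope_subset_Icc : chainPolytope P ⊆ Icc 0 1 :=
  fun a ha ↦ ⟨ha.1, fun i ↦ by simpa using ha.2 {i} (by simp)⟩

theorem indicator_one_mem_chainPolytope_iff (W : Set P) :
    W.indicator (1 : P → ℝ) ∈ chainPolytope P ↔ IsAntichain (· ≤ ·) W := by
  classical
  constructor
  · rintro ⟨-, hchain⟩ x hx y hy hne hle
    have hpair : IsChain (· ≤ ·) (({x, y} : Finset P) : Set P) := by
      simpa using IsChain.pair (r := (· ≤ ·)) hle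
    have hsum := hchain {x, y} hpair
    rw [Finset.sum_pair hne, indicator_of_mem hx, indicator_of_mem hy] at hsum
    norm_num at hsum
  · intro hW
    refine ⟨fun i ↦ indicator_nonneg (fun _ _ ↦ zero_le_one) i, fun C hC ↦ ?_⟩
    have hmeet : (C.filter (· ∈ W)).card ≤ 1 :=
      Finset.card_le_one.2 fun a ha b hb ↦
        inter_subsingleton_of_isChain_of_isAntichain hC hW
          (Finset.mem_filter.1 ha) (Finset.mem_filter.1 hb)
    simpa [indicator_apply, Finset.sum_boole] using hmeet

end ChainPolytope

/-- A 0/1-vector `ρ(W)` is a vertex of the chain polytope `C(P)` if and only if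
`W` is an antichain of `P`. -/
theorem indicator_extremePoint_chainPolytope_iff {P : Type*} [Fintype P] [PartialOrder P]
    (W : Set P) :
    W.indicator (1 : P → ℝ) ∈ Set.extremePoints ℝ (chainPolytope P) ↔
      IsAntichain (· ≤ ·) W := by
  rw [← indicator_one_mem_chainPolytope_iff]
  exact ⟨fun h ↦ extremePoints_subset h, fun h ↦ inter_extremePoints_subset_extremePoints_of_subset
    chainPolytope_subset_Icc ⟨h, indicator_one_mem_extremePoints_Icc W⟩⟩
end

section
/- Let P be a finite poset and let I, J be poset ideals of P. With I*J the poset ideal generated by max(I ∩ J) ∩ (max(I) ∪ max(J)), the multiset union of max(I) and max(J) equals the multiset union of max(I ∪ J) and max(I*J). Equivalently, for every x ∈ P, the number of sets among {max(I), max(J)} containing x equals the number of sets among {max(I ∪ J), max(I*J)} containing x. -/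
/-!
An element maximal in both `I` and `J` is maximal in `I ∪ J` and in `I*J`. An element maximal
in `I` but not in `J` lands in exactly one of them: in `max(I ∪ J)` if it lies outside `J`
(because `J` is a down-set), otherwise in `max(I ∩ J) ∩ max I ⊆ max(I*J)`. Hence `max(I ∪ J)` and
`max(I*J)` have union `max I ∪ max J` and intersection `max I ∩ max J`, and the identity is
inclusion–exclusion for indicators. Since its generators form an antichain, `max(I*J)` is
the generating set itself.
-/

variable {P : Type*} [Fintype P] [PartialOrder P]

/-- The set of maximal elements of a subset `Z` of a poset. -/
def maxSet (Z : Set P) : Set P := {x | x ∈ Z ∧ ∀ y ∈ Z, x ≤ y → x = y}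

/-- The poset ideal (down-set) generated by a subset `Y`. -/
def downClosure (Y : Set P) : Set P := {x | ∃ y ∈ Y, x ≤ y}

/-- The poset ideal `I*J` generated by `max(I ∩ J) ∩ (max(I) ∪ max(J))`. -/
def idealStar (I J : Set P) : Set P :=
  downClosure (maxSet (I ∩ J) ∩ (maxSet I ∪ maxSet J))

section

omit [Fintype P]

variable {I J W Z : Set P} {x : P}

theorem maxSet_eq_setOf_maximal (Z : Set P) : maxSet Z = {x | Maximal (· ∈ Z) x} :=
  Set.ext fun _ ↦
    ⟨fun h ↦ ⟨h.1, fun y hy hxy ↦ (h.2 y hy hxy).ge⟩,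
      fun h ↦ ⟨h.1, fun _ hy hxy ↦ (h.eq_of_ge hy hxy).symm⟩⟩

theorem isAntichain_maxSet (Z : Set P) : IsAntichain (· ≤ ·) (maxSet Z) := by
  rw [maxSet_eq_setOf_maximal]
  exact setOfPred_maximal_antichain _

theorem downClosure_eq_lowerClosure (Y : Set P) : downClosure Y = lowerClosure Y := by
  ext
  exact mem_lowerClosure.symm

theorem IsAntichain.maxSet_downClosure {Y : Set P} (hY : IsAntichain (· ≤ ·) Y) :
    maxSet (downClosure Y) = Y := by
  ext
  rw [maxSet_eq_setOf_maximal, downClosure_eq_lowerClosure]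
  exact hY.maximal_mem_lowerClosure_iff_mem

theorem maxSet_idealStar (I J : Set P) :
    maxSet (idealStar I J) = maxSet (I ∩ J) ∩ (maxSet I ∪ maxSet J) :=
  ((isAntichain_maxSet _).subset Set.inter_subset_left).maxSet_downClosure

theorem idealStar_comm (I J : Set P) : idealStar I J = idealStar J I := by
  rw [idealStar, idealStar, Set.inter_comm I, Set.union_comm (maxSet I)]

theorem mem_maxSet_of_subset (hx : x ∈ maxSet Z) (hWZ : W ⊆ Z) (hxW : x ∈ W) :
    x ∈ maxSet W :=
  ⟨hxW, fun y hy ↦ hx.2 y (hWZ hy)⟩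

theorem maxSet_union_subset (I J : Set P) : maxSet (I ∪ J) ⊆ maxSet I ∪ maxSet J := by
  rintro x hx
  rcases hx.1 with hxI | hxJ
  · exact .inl (mem_maxSet_of_subset hx Set.subset_union_left hxI)
  · exact .inr (mem_maxSet_of_subset hx Set.subset_union_right hxJ)

theorem maxSet_inter_maxSet_subset_maxSet_union (I J : Set P) :
    maxSet I ∩ maxSet J ⊆ maxSet (I ∪ J) := by
  rintro x ⟨hxI, hxJ⟩
  refine ⟨.inl hxI.1, ?_⟩
  rintro y (hy | hy)
  exacts [hxI.2 y hy, hxJ.2 y hy]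

theorem mem_maxSet_union_of_notMem (hJ : IsLowerSet J) (hx : x ∈ maxSet I) (hxJ : x ∉ J) :
    x ∈ maxSet (I ∪ J) := by
  refine ⟨.inl hx.1, ?_⟩
  rintro y (hy | hy) hxy
  · exact hx.2 y hy hxy
  · exact absurd (hJ hxy hy) hxJ

theorem maxSet_subset_maxSet_union_union_maxSet_idealStar (hJ : IsLowerSet J) :
    maxSet I ⊆ maxSet (I ∪ J) ∪ maxSet (idealStar I J) := by
  intro x hx
  by_cases hxJ : x ∈ J
  · right
    rw [maxSet_idealStar]
    exact ⟨mem_maxSet_of_subset hx Set.inter_subset_left ⟨hx.1, hxJ⟩, .inl hx⟩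
  · exact .inl (mem_maxSet_union_of_notMem hJ hx hxJ)

theorem maxSet_union_union_maxSet_idealStar (hI : IsLowerSet I) (hJ : IsLowerSet J) :
    maxSet (I ∪ J) ∪ maxSet (idealStar I J) = maxSet I ∪ maxSet J := by
  refine subset_antisymm (Set.union_subset (maxSet_union_subset I J) ?_) ?_
  · rw [maxSet_idealStar]
    exact Set.inter_subset_right
  · refine Set.union_subset (maxSet_subset_maxSet_union_union_maxSet_idealStar hJ) ?_
    rw [Set.union_comm I, idealStar_comm]
    exact maxSet_subset_maxSet_union_union_maxSet_idealStar hI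

theorem maxSet_union_inter_maxSet_idealStar (I J : Set P) :
    maxSet (I ∪ J) ∩ maxSet (idealStar I J) = maxSet I ∩ maxSet J := by
  rw [maxSet_idealStar]
  refine subset_antisymm ?_ fun x hx ↦
    ⟨maxSet_inter_maxSet_subset_maxSet_union I J hx,
      mem_maxSet_of_subset hx.1 Set.inter_subset_left ⟨hx.1.1, hx.2.1⟩, .inl hx.1⟩
  rintro x ⟨hx, ⟨⟨hxI, hxJ⟩, -⟩, -⟩
  exact ⟨mem_maxSet_of_subset hx Set.subset_union_left hxI,
    mem_maxSet_of_subset hx Set.subset_union_right hxJ⟩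

end

/-- The multiset union of `max(I)` and `max(J)` equals the multiset union of
`max(I ∪ J)` and `max(I*J)`: every `x ∈ P` occurs equally often on each side. -/
theorem max_multiset_identity (I J : Set P) (hI : IsLowerSet I) (hJ : IsLowerSet J) :
    ∀ x : P, (maxSet I).indicator (1 : P → ℕ) x + (maxSet J).indicator (1 : P → ℕ) x =
      (maxSet (I ∪ J)).indicator (1 : P → ℕ) x +
        (maxSet (idealStar I J)).indicator (1 : P → ℕ) x := by
  intro x
  rw [← Set.indicator_union_add_inter_apply,
    ← Set.indicator_union_add_inter_apply _ (maxSet (I ∪ J)),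
    maxSet_union_union_maxSet_idealStar hI hJ, maxSet_union_inter_maxSet_idealStar]
end
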